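/- arXiv:2308.04810 — 2 statements merged into one kernel-verified Lean document; each statement's English description precedes it below -/
import Mathlib

section
/- Let h be a left Leibniz algebra and M an h-bimodule. The Leibniz cochain complex with CL^n(h,M) = Hom(h^{⊗n}, M) and differential d^n f(x₀,…,xₙ) = Σ_{i=0}^{n−1} (−1)^i x_i·f(x₀,…,x̂_i,…,xₙ) + (−1)^{n−1} f(x₀,…,x_{n−1})·xₙ + Σ_{0≤i<j≤n} (−1)^{i+1} f(x₀,…,x̂_i,…,x_{j−1},[x_i,x_j],x_{j+1},…,xₙ) satisfies d^{n+1} ∘ d^n = 0. -/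
set_option linter.unusedSectionVars false

/-- The Loday coboundary operator of a left Leibniz algebra `h` with coefficients in an
`h`-bimodule `M`, written on cochains viewed as functions `(Fin n → h) → M`
(cochains in `CL^n(h,M) = Hom(h^{⊗n}, M)` are the multilinear ones). -/
noncomputable def lodayD {K : Type*} [Field K]
    {h : Type*} [AddCommGroup h] [Module K h]
    {M : Type*} [AddCommGroup M] [Module K M]
    (lb : h →ₗ[K] h →ₗ[K] h)
    (l : h →ₗ[K] M →ₗ[K] M) (r : h →ₗ[K] M →ₗ[K] M)
    (n : ℕ) (f : (Fin n → h) → M) : (Fin (n + 1) → h) → M :=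
  fun g =>
    (∑ i : Fin n, ((-1 : ℤ) ^ (i : ℕ)) •
        l (g i.castSucc) (f (g ∘ (Fin.succAbove i.castSucc)))) +
    ((-1 : ℤ) ^ (n + 1)) • r (g (Fin.last n)) (f (g ∘ Fin.castSucc)) +
    ∑ i : Fin (n + 1), ∑ j : Fin (n + 1),
      if i < j then
        ((-1 : ℤ) ^ ((i : ℕ) + 1)) •
          f ((Function.update g j (lb (g i) (g j))) ∘ (Fin.succAbove i))
      else 0

section LodayAux

variable {K : Type*} [Field K]
    {h : Type*} [AddCommGroup h] [Module K h]
    {M : Type*} [AddCommGroup M] [Module K M]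
    (lb : h →ₗ[K] h →ₗ[K] h)
    (l : h →ₗ[K] M →ₗ[K] M) (r : h →ₗ[K] M →ₗ[K] M)

/-- insertion of `x` in the first slot -/
def lodayIns (x : h) {n : ℕ} (F : (Fin (n+1) → h) → M) : (Fin n → h) → M :=
  fun z => F (Fin.cons x z)

/-- Lie-derivative-type operator -/
def lodayTheta (x : h) {n : ℕ} (F : (Fin n → h) → M) : (Fin n → h) → M :=
  fun z => l x (F z) - ∑ j, F (Function.update z j (lb x (z j)))

lemma cons_comp_succ {n : ℕ} (x : h) (z : Fin n → h) :
    Fin.cons x z ∘ Fin.succ = z := by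
  funext j; simp

lemma cons_comp_succAbove_succ {n : ℕ} (x : h) (z : Fin (n+1) → h) (m : Fin (n+1)) :
    Fin.cons x z ∘ Fin.succAbove m.succ = Fin.cons x (z ∘ Fin.succAbove m) := by
  funext j
  refine Fin.cases ?_ (fun j' => ?_) j <;> simp

lemma cons_comp_castSucc {n : ℕ} (x : h) (z : Fin (n+1) → h) :
    Fin.cons x z ∘ Fin.castSucc = Fin.cons x (z ∘ Fin.castSucc) := by
  funext j
  refine Fin.cases ?_ (fun j' => ?_) j
  · simp
  · simp only [Function.comp_apply, Fin.cons_succ, ← Fin.succ_castSucc, Fin.cons_succ]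

lemma update_cons_succ {n : ℕ} (x : h) (z : Fin n → h) (j : Fin n) (v : h) :
    Function.update (Fin.cons x z : Fin (n+1) → h) j.succ v = Fin.cons x (Function.update z j v) := by
  funext k
  refine Fin.cases ?_ (fun k' => ?_) k
  · rw [Function.update_of_ne (Fin.succ_ne_zero j).symm]; simp
  · rcases eq_or_ne k' j with rfl | hne
    · simp
    · rw [Function.update_of_ne (by simpa using hne), Fin.cons_succ, Fin.cons_succ,
        Function.update_of_ne hne]

end LodayAux

section LodayAux2
variable {K : Type*} [Field K]
    {h : Type*} [AddCommGroup h] [Module K h]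
    {M : Type*} [AddCommGroup M] [Module K M]
    (lb : h →ₗ[K] h →ₗ[K] h)
    (l : h →ₗ[K] M →ₗ[K] M) (r : h →ₗ[K] M →ₗ[K] M)


lemma ite_sub_zero' {c : Prop} [Decidable c] (a b : M) :
    (if c then a - b else 0) = (if c then a else 0) - (if c then b else 0) := by
  split <;> simp

lemma ite_neg_zero {c : Prop} [Decidable c] (a : M) :
    (if c then -a else 0) = -(if c then a else 0) := by split <;> simp

lemma cons_last {n : ℕ} (x : h) (z : Fin (n+1) → h) :
    (Fin.cons x z : Fin (n+2) → h) (Fin.last (n+1)) = z (Fin.last n) := by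
  rw [← Fin.succ_last, Fin.cons_succ]

lemma lodayIns_lodayD (x : h) {n : ℕ} (F : (Fin (n+1) → h) → M) :
    lodayIns x (lodayD lb l r (n+1) F) =
      fun z => lodayTheta lb l x F z - lodayD lb l r n (lodayIns x F) z := by
  funext z
  simp only [lodayIns, lodayD, lodayTheta, Fin.sum_univ_succ]
  simp only [Fin.castSucc_zero, Fin.cons_zero, Fin.succAbove_zero, cons_comp_succ,
    Fin.val_zero, pow_zero, one_smul, ← Fin.succ_castSucc, Fin.cons_succ,
    cons_comp_succAbove_succ, Fin.val_succ, Fin.cons_succ,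
    cons_comp_castSucc, update_cons_succ, Fin.update_cons_zero,
    Fin.succ_pos, if_true, Fin.not_lt_zero, if_false,
    Fin.succ_lt_succ_iff, pow_succ, mul_neg_one, neg_smul, neg_neg,
    Finset.sum_neg_distrib, lt_self_iff_false]
  simp only [ite_neg_zero, cons_last, Finset.sum_neg_distrib, zero_add, add_zero, neg_neg]
  abel

lemma lodayIns_lodayTheta (x y : h) {n : ℕ} (F : (Fin (n+1) → h) → M) :
    lodayIns y (lodayTheta lb l x F) =
      fun z => lodayTheta lb l x (lodayIns y F) z - lodayIns (lb x y) F z := by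
  funext z
  simp only [lodayIns, lodayTheta, Fin.sum_univ_succ, Fin.update_cons_zero,
    update_cons_succ, Fin.cons_succ, Fin.cons_zero]
  abel

lemma lodayTheta_sub (x : h) {n : ℕ} (F G : (Fin n → h) → M) :
    lodayTheta lb l x (fun z => F z - G z) =
      fun z => lodayTheta lb l x F z - lodayTheta lb l x G z := by
  funext z
  simp only [lodayTheta, map_sub, Finset.sum_sub_distrib]
  abel

lemma lodayD_sub {n : ℕ} (F G : (Fin n → h) → M) :
    lodayD lb l r n (fun z => F z - G z) =
      fun g => lodayD lb l r n F g - lodayD lb l r n G g := by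
  funext g
  simp only [lodayD, map_sub, smul_sub, ite_sub_zero', Finset.sum_sub_distrib]
  abel

set_option maxHeartbeats 1000000 in
lemma lodayTheta_comm
    (leibniz : ∀ x y z : h, lb x (lb y z) = lb (lb x y) z + lb y (lb x z))
    (hLLM : ∀ (x y : h) (m : M), l (lb x y) m = l x (l y m) - l y (l x m))
    (x y : h) {n : ℕ} (f : MultilinearMap K (fun _ : Fin n => h) M) (g : Fin n → h) :
    lodayTheta lb l x (lodayTheta lb l y ⇑f) g =
      lodayTheta lb l y (lodayTheta lb l x ⇑f) g + lodayTheta lb l (lb x y) ⇑f g := by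
  classical
  set T : h → h → Fin n → Fin n → M := fun a b k j =>
    f (Function.update (Function.update g k (lb a (g k))) j
        (lb b (Function.update g k (lb a (g k)) j))) with hT
  have hoff : ∀ a b : h, ∀ k j : Fin n, k ≠ j → T a b k j = T b a j k := by
    intro a b k j hkj
    rw [hT]
    simp only
    rw [Function.update_of_ne hkj.symm, Function.update_of_ne hkj,
      Function.update_comm hkj]
  have hdiag : ∀ a b : h, ∀ k : Fin n, T a b k k =
      f (Function.update g k (lb b (lb a (g k)))) := by
    intro a b k
    rw [hT]
    simp only [Function.update_self, Function.update_idem]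
  have hswap : ∑ k, ∑ j, T x y k j - ∑ k, ∑ j, T y x k j
      = ∑ k, (T x y k k - T y x k k) := by
    rw [← Finset.sum_sub_distrib]
    simp_rw [← Finset.sum_sub_distrib]
    rw [← Fintype.sum_prod_type']
    have h1 : ∀ p : Fin n × Fin n, T x y p.1 p.2 - T y x p.1 p.2 =
        (if p.1 = p.2 then T x y p.1 p.2 - T y x p.1 p.2 else 0) +
        (if p.1 = p.2 then 0 else T x y p.1 p.2 - T y x p.1 p.2) := by
      intro p; split <;> simp
    rw [Finset.sum_congr rfl (fun p _ => h1 p), Finset.sum_add_distrib]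
    have h2 : ∑ p : Fin n × Fin n,
        (if p.1 = p.2 then (0:M) else T x y p.1 p.2 - T y x p.1 p.2) = 0 := by
      apply Finset.sum_ninvolution (fun p => (p.2, p.1))
      · intro p
        rcases eq_or_ne p.1 p.2 with he | hne
        · simp [he]
        · simp only [hne, hne.symm, if_false]
          rw [hoff x y _ _ hne, hoff y x _ _ hne]
          abel
      · intro p hp
        rcases eq_or_ne p.1 p.2 with he | hne
        · simp [he] at hp
        · intro hcon
          exact hne (congrArg Prod.snd hcon ▸ (congrArg Prod.fst hcon).symm)
      · intro p; exact Finset.mem_univ _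
      · intro p; rfl
    rw [h2, add_zero, Fintype.sum_prod_type]
    apply Finset.sum_congr rfl
    intro k _
    simp
  have hdd : ∀ k : Fin n, T x y k k - T y x k k =
      -(f (Function.update g k (lb (lb x y) (g k)))) := by
    intro k
    rw [hdiag, hdiag, leibniz x y (g k), f.map_update_add]
    abel
  have hkey : ∑ k, ∑ j, T x y k j = ∑ k, ∑ j, T y x k j
      - ∑ k, f (Function.update g k (lb (lb x y) (g k))) := by
    have h' := hswap
    rw [Finset.sum_congr rfl (fun k _ => hdd k), Finset.sum_neg_distrib,
      sub_eq_iff_eq_add] at h'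
    rw [h']
    abel
  have hL : l x (l y (f g)) = l y (l x (f g)) + l (lb x y) (f g) := by
    rw [hLLM x y (f g)]; abel
  simp only [lodayTheta, map_sub, map_sum, Finset.sum_sub_distrib]
  simp only [hT] at hkey
  rw [hkey, hL]
  abel

/-- insertion as a multilinear map -/
noncomputable def lodayInsM (x : h) {n : ℕ}
    (f : MultilinearMap K (fun _ : Fin (n+1) => h) M) :
    MultilinearMap K (fun _ : Fin n => h) M :=
  f.curryLeft x

lemma lodayIns_coe (x : h) {n : ℕ} (f : MultilinearMap K (fun _ : Fin (n+1) => h) M) :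
    lodayIns x (⇑f) = ⇑(lodayInsM x f) := by
  funext z
  exact (f.curryLeft_apply x z).symm

lemma lodayIns_ext {n : ℕ} {F G : (Fin (n+1) → h) → M}
    (H : ∀ x, lodayIns x F = lodayIns x G) : F = G := by
  funext g
  have := congrFun (H (g 0)) (Fin.tail g)
  simpa [lodayIns, Fin.cons_self_tail] using this

lemma lodayTheta_lodayD
    (leibniz : ∀ x y z : h, lb x (lb y z) = lb (lb x y) z + lb y (lb x z))
    (hLLM : ∀ (x y : h) (m : M), l (lb x y) m = l x (l y m) - l y (l x m))
    (hLML : ∀ (x y : h) (m : M), r y (l x m) = l x (r y m) - r (lb x y) m)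
    (x : h) :
    ∀ {n : ℕ} (f : MultilinearMap K (fun _ : Fin n => h) M),
      lodayTheta lb l x (lodayD lb l r n ⇑f) = lodayD lb l r n (lodayTheta lb l x ⇑f) := by
  intro n
  induction n with
  | zero =>
    intro f
    funext g
    simp only [lodayTheta, lodayD, Fin.sum_univ_succ, Finset.univ_eq_empty,
      Finset.sum_empty, lt_self_iff_false, if_false, zero_add, add_zero,
      pow_one, neg_smul, one_smul, map_neg, map_sub, map_zero, Fin.sum_univ_zero,
      Function.update_self, sub_zero]
    have hf0 : f (Function.update g 0 ((lb x) (g 0)) ∘ Fin.castSucc) = f (g ∘ Fin.castSucc) :=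
      congrArg _ (Subsingleton.elim _ _)
    simp only [show Fin.last 0 = 0 from rfl, Function.update_self, hf0]
    rw [hLML x (g 0) (f (g ∘ Fin.castSucc))]
    abel
  | succ n ih =>
    intro f
    apply lodayIns_ext
    intro y
    have ihy : lodayTheta lb l x (lodayD lb l r n (lodayIns y ⇑f)) =
        lodayD lb l r n (lodayTheta lb l x (lodayIns y ⇑f)) := by
      rw [lodayIns_coe]; exact ih (lodayInsM y f)
    rw [lodayIns_lodayTheta, lodayIns_lodayD, lodayIns_lodayD, lodayIns_lodayD,
      lodayTheta_sub, ihy, lodayIns_lodayTheta, lodayD_sub]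
    funext z
    simp only
    rw [lodayTheta_comm lb l leibniz hLLM x y f z]
    abel

end LodayAux2

/-- The Loday differential on the complex `CL^n(h,M) = Hom(h^{⊗n},M)` of a left
Leibniz algebra `h` with coefficients in an `h`-bimodule `M` squares to zero. -/
theorem lodayD_squared_zero {K : Type*} [Field K]
    {h : Type*} [AddCommGroup h] [Module K h]
    {M : Type*} [AddCommGroup M] [Module K M]
    (lb : h →ₗ[K] h →ₗ[K] h)
    (leibniz : ∀ x y z : h, lb x (lb y z) = lb (lb x y) z + lb y (lb x z))
    (l : h →ₗ[K] M →ₗ[K] M) (r : h →ₗ[K] M →ₗ[K] M)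
    (hLLM : ∀ (x y : h) (m : M), l (lb x y) m = l x (l y m) - l y (l x m))
    (hLML : ∀ (x y : h) (m : M), r y (l x m) = l x (r y m) - r (lb x y) m)
    (hMLL : ∀ (x y : h) (m : M), r y (r x m) = r (lb x y) m - l x (r y m)) :
    ∀ (n : ℕ) (f : MultilinearMap K (fun _ : Fin n => h) M),
      lodayD lb l r (n + 1) (lodayD lb l r n ⇑f) = 0 := by
  intro n
  induction n with
  | zero =>
    intro f
    funext g
    simp only [lodayD, Fin.sum_univ_succ, Finset.univ_eq_empty, Finset.sum_empty,
      Fin.sum_univ_zero, lt_self_iff_false, if_false, zero_add, add_zero,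
      pow_one, neg_smul, one_smul, map_neg, map_sub, map_zero,
      pow_succ, pow_zero, one_mul, mul_neg_one, neg_neg,
      Fin.succ_pos, if_true, Fin.not_lt_zero]
    have e0 : ∀ u : Fin 0 → h, f u = f Fin.elim0 := fun u => congrArg _ (Subsingleton.elim _ _)
    have A1 : (g ∘ (Fin.castSucc (0 : Fin 1)).succAbove) (Fin.last 0) = g 1 := rfl
    have A2 : g (Fin.last (0+1)) = g 1 := rfl
    have A3 : (g ∘ Fin.castSucc) (Fin.last 0) = g 0 := rfl
    have A4 : (Function.update g (Fin.succ 0) ((lb (g 0)) (g (Fin.succ 0))) ∘ Fin.succAbove 0)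
        (Fin.last 0) = lb (g 0) (g 1) := rfl
    rw [A1, A2, A3, A4]
    simp only [e0, Fin.castSucc_zero, Fin.val_zero, pow_zero, one_smul, neg_smul, Pi.zero_apply]
    rw [hMLL (g 0) (g 1) (f Fin.elim0)]
    abel
  | succ n ih =>
    intro f
    apply lodayIns_ext
    intro y
    have h0 : lodayD lb l r (n+1) (lodayD lb l r n (lodayIns y ⇑f)) = 0 := by
      rw [lodayIns_coe]; exact ih (lodayInsM y f)
    rw [lodayIns_lodayD, lodayTheta_lodayD lb l r leibniz hLLM hLML y f,
      lodayIns_lodayD, lodayD_sub, h0]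
    funext z
    simp only [lodayIns, Pi.zero_apply, sub_zero, sub_self]
end

section
/- Let h = K be the 1-dimensional abelian Lie algebra viewed as a Leibniz algebra, and let M be a finite-dimensional h-bimodule. Then HL⁰(h,M) ≅ M^h = {m : m·e = 0}, HL^n(h,M) ≅ M⁰/(M·h) for n odd, and HL^n(h,M) ≅ M^h/M₀ for n even, n ≠ 0, where M⁰ = {m ∈ M : e·m + m·e = 0}, M₀ = span{e·m + m·e}, and e is a basis vector of K. Moreover M⁰/(M·h) ≅ M^h/M₀ as K-vector spaces. -/
/-- Leibniz cohomology of the 1-dimensional abelian Lie/Leibniz algebra `h = K·e` with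
values in a finite-dimensional bimodule `M`.  Identifying `CL^n(h,M) ≅ M`, the Loday
differential is `D n = (Σ_{i<n} (−1)^i)·l + (−1)^{n+1}·r` where `l = e·(-)`, `r = (-)·e`.
Then `HL⁰ = M^h = ker r`, `HL^n ≅ M⁰/(M·h)` for odd `n`, `HL^n ≅ M^h/M₀` for even `n ≠ 0`,
and moreover `M⁰/(M·h) ≅ M^h/M₀` as `K`-vector spaces. -/
theorem hl_of_one_dimensional {K : Type*} [Field K]
    {M : Type*} [AddCommGroup M] [Module K M] [FiniteDimensional K M]
    (l r : M →ₗ[K] M)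
    (hLML : ∀ m : M, r (l m) = l (r m))
    (hMLL : ∀ m : M, r (r m) = - l (r m))
    (D : ℕ → M →ₗ[K] M)
    (hD : ∀ n : ℕ, D n = (∑ i ∈ Finset.range n, (-1 : ℤ) ^ i) • l + ((-1 : ℤ) ^ (n + 1)) • r) :
    -- HL⁰(h,M) = M^h = {m : m·e = 0}
    (LinearMap.ker (D 0) = LinearMap.ker r) ∧
    -- HL^n(h,M) ≅ M⁰/(M·h) for n odd
    (∀ n : ℕ, Odd n → Nonempty (
      (LinearMap.ker (D n) ⧸
        Submodule.comap (LinearMap.ker (D n)).subtype (LinearMap.range (D (n - 1)))) ≃ₗ[K]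
      (LinearMap.ker (l + r) ⧸
        Submodule.comap (LinearMap.ker (l + r)).subtype (LinearMap.range r)))) ∧
    -- HL^n(h,M) ≅ M^h/M₀ for n even, n ≠ 0
    (∀ n : ℕ, Even n → n ≠ 0 → Nonempty (
      (LinearMap.ker (D n) ⧸
        Submodule.comap (LinearMap.ker (D n)).subtype (LinearMap.range (D (n - 1)))) ≃ₗ[K]
      (LinearMap.ker r ⧸
        Submodule.comap (LinearMap.ker r).subtype (LinearMap.range (l + r))))) ∧
    -- M⁰/(M·h) ≅ M^h/M₀
    Nonempty (
      (LinearMap.ker (l + r) ⧸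
        Submodule.comap (LinearMap.ker (l + r)).subtype (LinearMap.range r)) ≃ₗ[K]
      (LinearMap.ker r ⧸
        Submodule.comap (LinearMap.ker r).subtype (LinearMap.range (l + r)))) := by
  -- The differential in closed form
  have hDeven : ∀ n : ℕ, Even n → D n = -r := by
    intro n hn
    rw [hD n, neg_one_geom_sum, if_pos hn, zero_smul, zero_add]
    have : Odd (n + 1) := Even.add_one hn
    rw [this.neg_one_pow]
    simp
  have hDodd : ∀ n : ℕ, Odd n → D n = l + r := by
    intro n hn
    rw [hD n, neg_one_geom_sum, if_neg (Nat.not_even_iff_odd.mpr hn)]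
    have : Even (n + 1) := Odd.add_one hn
    rw [this.neg_one_pow]
    simp
  -- range inclusions
  have hrange_r : LinearMap.range r ≤ LinearMap.ker (l + r) := by
    rintro x ⟨m, rfl⟩
    simp only [LinearMap.mem_ker, LinearMap.add_apply]
    rw [hMLL m]; abel
  have hrange_lr : LinearMap.range (l + r) ≤ LinearMap.ker r := by
    rintro x ⟨m, rfl⟩
    simp only [LinearMap.mem_ker, LinearMap.add_apply, map_add]
    rw [hMLL m, hLML m]; abel
  have hker_neg : LinearMap.ker (-r) = LinearMap.ker r := by
    ext x; simp
  have hrange_neg : LinearMap.range (-r) = LinearMap.range r := by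
    ext x
    constructor
    · rintro ⟨m, rfl⟩; exact ⟨-m, by simp⟩
    · rintro ⟨m, rfl⟩; exact ⟨-m, by simp⟩
  refine ⟨?_, ?_, ?_, ?_⟩
  · rw [hDeven 0 Even.zero, hker_neg]
  · intro n hn
    have h1 : D n = l + r := hDodd n hn
    have h2 : D (n - 1) = -r := hDeven (n - 1) (Nat.Odd.sub_odd hn odd_one)
    rw [h1, h2, hrange_neg]
    exact ⟨LinearEquiv.refl K _⟩
  · intro n hn hn0
    have h1 : LinearMap.ker (D n) = LinearMap.ker r := by
      rw [hDeven n hn, hker_neg]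
    have h2 : D (n - 1) = l + r := hDodd (n - 1)
      (Nat.Even.sub_odd (Nat.one_le_iff_ne_zero.mpr hn0) hn odd_one)
    rw [h1, h2]
    exact ⟨LinearEquiv.refl K _⟩
  · -- dimension count
    have e1 := (Submodule.comapSubtypeEquivOfLe hrange_r).finrank_eq
    have e2 := (Submodule.comapSubtypeEquivOfLe hrange_lr).finrank_eq
    have q1 := Submodule.finrank_quotient_add_finrank
      (Submodule.comap (LinearMap.ker (l + r)).subtype (LinearMap.range r))
    have q2 := Submodule.finrank_quotient_add_finrank
      (Submodule.comap (LinearMap.ker r).subtype (LinearMap.range (l + r)))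
    have rn1 := LinearMap.finrank_range_add_finrank_ker (l + r)
    have rn2 := LinearMap.finrank_range_add_finrank_ker r
    exact FiniteDimensional.nonempty_linearEquiv_of_finrank_eq (by omega)
end
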